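/- The harmonic mapping f_D = h_D + conj∘g_D, where h_D(z) = (1/4)·log((1+z)/(1−z)) − (i/4)·log((1+iz)/(1−iz)) and g_D(z) = −(1/4)·log((1+z)/(1−z)) − (i/4)·log((1+iz)/(1−iz)), is injective on 𝔻 and f_D(𝔻) is convex in the direction of the imaginary axis. -/

import Mathlib

/-! On the disk, `arg ((1 + z) / (1 - z)) = arctan (2 Im z / (1 - |z|²))`, and the same for `i z`,
so `f_D(z) = (arctan u + i arctan v) / 2` where `u + i v = 2 z / (1 - |z|²)`. The map
`z ↦ 2 z / (1 - |z|²)` is a bijection of `𝔻` onto `ℂ`, with inverse `w ↦ w / (1 + √(1 + |w|²))`,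
and the componentwise arctangent is injective. Hence `f_D` is injective on `𝔻`, and `f_D(𝔻)` is
the open square `(-π/4, π/4)²`, which is convex. -/

open Complex Set

noncomputable section

/-- The open unit disk in the complex plane. -/
def 𝔻 : Set ℂ := {z : ℂ | ‖z‖ < 1}

/-- A set `Ω ⊆ ℂ` is convex in the direction of the imaginary axis if for every `a ∈ ℂ` the set
`{t ∈ ℝ : a + t·i ∈ Ω}` is an interval (order-connected). -/
def ConvexImDir (Ω : Set ℂ) : Prop :=
  ∀ a : ℂ, ({t : ℝ | a + (t : ℂ) * Complex.I ∈ Ω}).OrdConnected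

/-- Analytic part `h_D` of the harmonic Scherk doubly-periodic mapping. -/
def hD : ℂ → ℂ := fun z =>
  (1 / 4) * Complex.log ((1 + z) / (1 - z)) -
    (Complex.I / 4) * Complex.log ((1 + Complex.I * z) / (1 - Complex.I * z))

/-- Co-analytic part `g_D` of the harmonic Scherk doubly-periodic mapping. -/
def gD : ℂ → ℂ := fun z =>
  -((1 / 4) * Complex.log ((1 + z) / (1 - z))) -
    (Complex.I / 4) * Complex.log ((1 + Complex.I * z) / (1 - Complex.I * z))

/-- Analytic part `h_C` of the harmonic catenoid mapping. -/
def hC : ℂ → ℂ := fun z =>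
  (1 / 4) * Complex.log ((1 + z) / (1 - z)) + (1 / 2) * (z / (1 - z ^ 2))

/-- Co-analytic part `g_C` of the harmonic catenoid mapping. -/
def gC : ℂ → ℂ := fun z =>
  (1 / 4) * Complex.log ((1 + z) / (1 - z)) - (1 / 2) * (z / (1 - z ^ 2))

/-- The harmonic Scherk doubly-periodic mapping `f_D = h_D + conj ∘ g_D`. -/
def fD : ℂ → ℂ := fun z => hD z + (starRingEnd ℂ) (gD z)

open scoped Real ComplexConjugate

section BallToSpace

variable {E : Type*} [NormedAddCommGroup E] [NormedSpace ℝ E]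

def ballToSpace (x : E) : E := (2 / (1 - ‖x‖ ^ 2)) • x

def spaceToBall (y : E) : E := (1 + √(1 + ‖y‖ ^ 2))⁻¹ • y

lemma norm_spaceToBall_lt_one (y : E) : ‖spaceToBall y‖ < 1 := by
  have hs : ‖y‖ < √(1 + ‖y‖ ^ 2) := Real.lt_sqrt_of_sq_lt (by linarith)
  have hpos : 0 < 1 + √(1 + ‖y‖ ^ 2) := by positivity
  rw [spaceToBall, norm_smul, Real.norm_of_nonneg (by positivity), inv_mul_lt_one₀ hpos]
  linarith

lemma ballToSpace_spaceToBall (y : E) : ballToSpace (spaceToBall y) = y := by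
  set s := √(1 + ‖y‖ ^ 2)
  have hs : s ^ 2 = 1 + ‖y‖ ^ 2 := Real.sq_sqrt (by positivity)
  have hpos : 0 < 1 + s := by positivity
  have hnorm : ‖spaceToBall y‖ = ‖y‖ / (1 + s) := by
    rw [spaceToBall, norm_smul, Real.norm_of_nonneg (by positivity), inv_mul_eq_div]
  have hcoef : 2 / (1 - ‖spaceToBall y‖ ^ 2) = 1 + s := by
    have hden : 1 - ‖spaceToBall y‖ ^ 2 = 2 / (1 + s) := by
      rw [hnorm]
      field_simp
      linear_combination hs
    rw [hden, div_div_eq_mul_div, mul_div_cancel_left₀ _ two_ne_zero]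
  rw [ballToSpace, hcoef, spaceToBall, smul_smul, mul_inv_cancel₀ hpos.ne', one_smul]

lemma spaceToBall_ballToSpace {x : E} (hx : ‖x‖ < 1) : spaceToBall (ballToSpace x) = x := by
  have hr : 0 < 1 - ‖x‖ ^ 2 := by nlinarith [norm_nonneg x]
  have hnorm : ‖ballToSpace x‖ = 2 * ‖x‖ / (1 - ‖x‖ ^ 2) := by
    rw [ballToSpace, norm_smul, Real.norm_of_nonneg (by positivity)]
    ring
  have hsqrt : √(1 + ‖ballToSpace x‖ ^ 2) = (1 + ‖x‖ ^ 2) / (1 - ‖x‖ ^ 2) := by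
    rw [Real.sqrt_eq_iff_eq_sq (by positivity) (by positivity), hnorm]
    field_simp
    ring
  rw [spaceToBall, hsqrt, ballToSpace, smul_smul]
  convert one_smul ℝ x
  field_simp
  ring

lemma bijOn_ballToSpace : BijOn (ballToSpace (E := E)) (Metric.ball 0 1) univ := by
  refine InvOn.bijOn (f' := spaceToBall) ⟨fun x hx => ?_, fun y _ => ballToSpace_spaceToBall y⟩
    (mapsTo_univ _ _) fun y _ => by simpa using norm_spaceToBall_lt_one y
  exact spaceToBall_ballToSpace (by simpa using hx)

end BallToSpace

theorem Convex.reProdIm {s t : Set ℝ} (hs : Convex ℝ s) (ht : Convex ℝ t) : Convex ℝ (s ×ℂ t) :=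
  (hs.linear_preimage reLm).inter (ht.linear_preimage imLm)

theorem Convex.convexImDir {Ω : Set ℂ} (hΩ : Convex ℝ Ω) : ConvexImDir Ω := fun a => by
  have hline : {t : ℝ | a + (t : ℂ) * I ∈ Ω} = AffineMap.lineMap a (a + I) ⁻¹' Ω := by
    ext t
    simp [AffineMap.lineMap_apply_module', add_comm]
  rw [hline]
  exact (hΩ.affine_preimage _).ordConnected

lemma 𝔻_eq_ball : 𝔻 = Metric.ball 0 1 := by
  ext z
  simp [𝔻]

lemma arg_eq_arctan {w : ℂ} (hw : 0 < w.re) : arg w = Real.arctan (w.im / w.re) :=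
  (Real.arctan_eq_of_tan_eq (tan_arg w) (abs_lt.1 (abs_arg_lt_pi_div_two_iff.2 (Or.inl hw)))).symm

lemma arg_one_add_div_one_sub {z : ℂ} (hz : ‖z‖ < 1) :
    arg ((1 + z) / (1 - z)) = Real.arctan (ballToSpace z).im := by
  have hr : 0 < 1 - normSq z := by rw [normSq_eq_norm_sq]; nlinarith [norm_nonneg z]
  have hne : (1 : ℂ) - z ≠ 0 := by
    intro h
    rw [← sub_eq_zero.1 h] at hz
    simp at hz
  have hsq : 0 < normSq (1 - z) := normSq_pos.2 hne
  have hre : ((1 + z) / (1 - z)).re = (1 - normSq z) / normSq (1 - z) := by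
    rw [div_re]
    simp only [normSq_apply, add_re, sub_re, one_re, add_im, sub_im, one_im]
    ring
  have him : ((1 + z) / (1 - z)).im = 2 * z.im / normSq (1 - z) := by
    rw [div_im]
    simp only [normSq_apply, add_re, sub_re, one_re, add_im, sub_im, one_im]
    ring
  rw [arg_eq_arctan (by rw [hre]; positivity), hre, him, ballToSpace, smul_im, smul_eq_mul,
    Complex.sq_norm]
  congr 1
  field_simp

lemma ballToSpace_I_mul (z : ℂ) : ballToSpace (I * z) = I * ballToSpace z := by
  simp only [ballToSpace, norm_mul, norm_I, one_mul, real_smul]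
  ring

def halfArctan (w : ℂ) : ℂ := ⟨Real.arctan w.re / 2, Real.arctan w.im / 2⟩

lemma injective_halfArctan : Function.Injective halfArctan := fun v w h => by
  simp only [halfArctan, Complex.ext_iff] at h
  exact Complex.ext (Real.arctan_injective (by linarith [h.1]))
    (Real.arctan_injective (by linarith [h.2]))

lemma range_halfArctan :
    range halfArctan = Ioo (-(π / 4)) (π / 4) ×ℂ Ioo (-(π / 4)) (π / 4) := by
  have half_arctan_mem (x : ℝ) : Real.arctan x / 2 ∈ Ioo (-(π / 4)) (π / 4) := by
    constructor <;> linarith [Real.neg_pi_div_two_lt_arctan x, Real.arctan_lt_pi_div_two x]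
  have arctan_tan_two_mul {x : ℝ} (hx : x ∈ Ioo (-(π / 4)) (π / 4)) :
      Real.arctan (Real.tan (2 * x)) / 2 = x := by
    rw [Real.arctan_tan (by linarith [hx.1]) (by linarith [hx.2])]
    ring
  ext w
  refine ⟨?_, fun hw => ⟨⟨Real.tan (2 * w.re), Real.tan (2 * w.im)⟩, ?_⟩⟩
  · rintro ⟨v, rfl⟩
    exact ⟨half_arctan_mem v.re, half_arctan_mem v.im⟩
  · exact Complex.ext (arctan_tan_two_mul hw.1) (arctan_tan_two_mul hw.2)

lemma fD_eq (z : ℂ) :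
    fD z = (arg ((1 + I * z) / (1 - I * z)) + arg ((1 + z) / (1 - z)) * I) / 2 := by
  set A := log ((1 + z) / (1 - z))
  set B := log ((1 + I * z) / (1 - I * z))
  have hAB : fD z = ((A - conj A) - I * (B - conj B)) / 4 := by
    simp only [fD, hD, gD, map_sub, map_neg, map_mul, map_div₀, conj_I, map_one, map_ofNat, A, B]
    ring
  rw [hAB, sub_conj, sub_conj, log_im, log_im]
  push_cast
  linear_combination (-arg ((1 + I * z) / (1 - I * z)) / 2 : ℂ) * I_sq

lemma fD_eqOn_halfArctan_comp_ballToSpace : EqOn fD (halfArctan ∘ ballToSpace) 𝔻 := fun z hz => by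
  have hz' : ‖z‖ < 1 := by simpa [𝔻] using hz
  have hIz : ‖I * z‖ < 1 := by simpa using hz'
  rw [fD_eq, arg_one_add_div_one_sub hz', arg_one_add_div_one_sub hIz, ballToSpace_I_mul]
  apply Complex.ext <;> simp [halfArctan, -ofReal_arctan]

/-- The harmonic Scherk doubly-periodic mapping is injective on `𝔻` and its image is convex in
the direction of the imaginary axis. -/
theorem stmt12 : Set.InjOn fD 𝔻 ∧ ConvexImDir (fD '' 𝔻) := by
  have hbij : BijOn ballToSpace 𝔻 univ := by
    rw [𝔻_eq_ball]
    exact bijOn_ballToSpace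
  refine ⟨(injective_halfArctan.comp_injOn hbij.injOn).congr
    fD_eqOn_halfArctan_comp_ballToSpace.symm, ?_⟩
  rw [fD_eqOn_halfArctan_comp_ballToSpace.image_eq, image_comp, hbij.image_eq, image_univ,
    range_halfArctan]
  exact ((convex_Ioo _ _).reProdIm (convex_Ioo _ _)).convexImDir
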